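/- arXiv:2003.03447 — 2 statements merged into one kernel-verified Lean document; each statement's English description precedes it below -/
import Mathlib

section
/- Let G be a simple graph on n vertices and let G̅ be its complement. For every k with 1 ≤ k ≤ n−2, if BC_k(G) holds then BC_{n−k−1}(G̅) holds. -/
/-!
Let `n = |V|`, let `m`, `m̄` be the numbers of edges of `G`, `Gᶜ`, and let `J` be the all-ones
matrix. Since `L(G) + L(Gᶜ) = nI - J`, the eigenvalues of `L(Gᶜ)` at `k + 1` orthonormal
eigenvectors `wᵢ` add up to `(k + 1)n - ∑ᵢ ⟪wᵢ, (J + L(G)) wᵢ⟫`. The matrix `J + L(G)` acts as `n`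
on the normalized all-ones vector `u` and as `L(G)` on the eigenvectors of `L(G)` with nonzero
eigenvalue, which are orthogonal to `u`; all these eigenvalues lie in `[0, n]`. Bessel's inequality
for `u` together with those eigenvectors, followed by a fractional knapsack bound, gives the Ky Fan
type estimate `∑ᵢ ⟪wᵢ, (J + L(G)) wᵢ⟫ ≤ n + s_k(G)`. As any `n - k - 1` eigenvalues of `L(Gᶜ)` are
all but `k + 1` of them, `s_{n-k-1}(Gᶜ) ≤ 2m̄ - kn + s_k(G)`, and `BC_k(G)` together with
`m + m̄ = n(n - 1)/2` turns this into `BC_{n-k-1}(Gᶜ)`.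
-/

open Finset

namespace Brouwer

variable {V : Type*}

/-- The sum of the `k` largest values of `f` on a finite type, expressed as the
supremum over all `k`-element subsets of the sum of `f` over the subset. -/
noncomputable def sumKLargest [Fintype V] (f : V → ℝ) (k : ℕ) : ℝ :=
  sSup { x : ℝ | ∃ T : Finset V, T.card = k ∧ ∑ i ∈ T, f i = x }

/-- The Laplacian matrix of a finite simple graph is Hermitian (real symmetric). -/
theorem lapMatrix_isHermitian [Fintype V] [DecidableEq V] (G : SimpleGraph V)
    [DecidableRel G.Adj] : (G.lapMatrix ℝ).IsHermitian := by
  rw [Matrix.IsHermitian, Matrix.conjTranspose_eq_transpose_of_trivial]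
  exact G.isSymm_lapMatrix (R := ℝ)

/-- The adjacency matrix of a finite simple graph is Hermitian (real symmetric). -/
theorem adjMatrix_isHermitian [Fintype V] [DecidableEq V] (G : SimpleGraph V)
    [DecidableRel G.Adj] : (G.adjMatrix ℝ).IsHermitian := by
  rw [Matrix.IsHermitian, Matrix.conjTranspose_eq_transpose_of_trivial]
  exact G.isSymm_adjMatrix

/-- The (multiset of) eigenvalues of the Laplacian matrix of `G`, indexed by vertices. -/
noncomputable def lapEig [Fintype V] [DecidableEq V] (G : SimpleGraph V) : V → ℝ := by
  classical exact (lapMatrix_isHermitian G).eigenvalues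

/-- The (multiset of) eigenvalues of the adjacency matrix of `G`, indexed by vertices. -/
noncomputable def adjEig [Fintype V] [DecidableEq V] (G : SimpleGraph V) : V → ℝ := by
  classical exact (adjMatrix_isHermitian G).eigenvalues

/-- `sLap G k` is `s_k(G)`, the sum of the `k` largest Laplacian eigenvalues of `G`. -/
noncomputable def sLap [Fintype V] [DecidableEq V] (G : SimpleGraph V) (k : ℕ) : ℝ :=
  sumKLargest (lapEig G) k

/-- The number of edges of `G`. -/
noncomputable def numEdges [Fintype V] (G : SimpleGraph V) : ℕ := by
  classical exact G.edgeFinset.card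

/-- `BC G k`: Brouwer's conjectured inequality `s_k(G) ≤ m + (k+1 choose 2)`. -/
def BC [Fintype V] [DecidableEq V] (G : SimpleGraph V) (k : ℕ) : Prop :=
  sLap G k ≤ numEdges G + (k + 1).choose 2

/-- Number of edges of `G` with both endpoints in `S`. -/
noncomputable def edgesWithin [Fintype V] [DecidableEq V] (G : SimpleGraph V)
    (S : Finset V) : ℕ := by
  classical exact (G.edgeFinset.filter (fun e => ∀ v ∈ e, v ∈ S)).card

/-- The adjacency spectral radius of `G`, i.e. the largest adjacency eigenvalue. -/
noncomputable def specRad [Fintype V] [DecidableEq V] (G : SimpleGraph V) : ℝ :=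
  sumKLargest (adjEig G) 1

/-- The maximum subgraph spectral density `t(G)`:
the supremum of `ρ(G[S])/|S|` over nonempty vertex subsets `S`. -/
noncomputable def maxDensity [Fintype V] [DecidableEq V] (G : SimpleGraph V) : ℝ :=
  sSup { x : ℝ | ∃ S : Finset V, S.Nonempty ∧
    x = specRad (G.induce (↑S : Set V)) / (S.card : ℝ) }

/-- Edge-edit distance between two graphs on the same vertex set. -/
noncomputable def editDistance [Fintype V] (G H : SimpleGraph V) : ℕ := by
  classical exact (symmDiff G.edgeFinset H.edgeFinset).card

/-- A split graph: the vertex set partitions into a clique and an independent set. -/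
def IsSplit (G : SimpleGraph V) : Prop :=
  ∃ C : Set V, G.IsClique C ∧ Gᶜ.IsClique Cᶜ

/-- The splittance of `G`: the least number of edge edits needed to reach a split graph. -/
noncomputable def splittance [Fintype V] (G : SimpleGraph V) : ℕ :=
  sInf { d : ℕ | ∃ H : SimpleGraph V, IsSplit H ∧ editDistance G H = d }

/-- The join `G + K₁` of `G` with one new vertex adjacent to every vertex of `G`. -/
def joinOne (G : SimpleGraph V) : SimpleGraph (Option V) where
  Adj x y := x ≠ y ∧ ∀ a, x = some a → ∀ b, y = some b → G.Adj a b
  symm := by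
    constructor
    rintro x y ⟨hxy, h⟩
    exact ⟨hxy.symm, fun a ha b hb => (h b hb a ha).symm⟩
  loopless := by constructor; rintro x ⟨hxx, -⟩; exact hxx rfl

end Brouwer

section Orthonormal

variable {ι κ E : Type*} [NormedAddCommGroup E] [InnerProductSpace ℝ E]

theorem Orthonormal.sum_inner_sq_le {w : κ → E} (hw : Orthonormal ℝ w) (S : Finset κ) (x : E) :
    ∑ i ∈ S, inner ℝ (w i) x ^ 2 ≤ ‖x‖ ^ 2 := by
  simpa only [Real.norm_eq_abs, sq_abs] using hw.sum_inner_products_le x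

theorem Orthonormal.option_elim {v : ι → E} (hv : Orthonormal ℝ v) {u : E} (hu : ‖u‖ = 1)
    (huv : ∀ i, inner ℝ u (v i) = 0) : Orthonormal ℝ (fun o : Option ι => o.elim u v) := by
  classical
  rw [orthonormal_iff_ite] at hv ⊢
  rintro (_ | i) (_ | j)
  · simp [hu]
  · simp [huv]
  · simp [real_inner_comm, huv]
  · simp [hv]

theorem Orthonormal.inner_sq_add_sum_inner_sq_le {b : ι → E} (hb : Orthonormal ℝ b) {u : E}
    (hu : ‖u‖ = 1) {s : Finset ι} (hus : ∀ p ∈ s, inner ℝ u (b p) = 0) (x : E) :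
    inner ℝ u x ^ 2 + ∑ p ∈ s, inner ℝ (b p) x ^ 2 ≤ ‖x‖ ^ 2 := by
  have hF := (hb.comp _ Subtype.val_injective).option_elim hu fun p => hus p.1 p.2
  simpa [Fintype.sum_option, sum_attach s (fun p => inner ℝ (b p) x ^ 2)]
    using hF.sum_inner_sq_le univ x

end Orthonormal

namespace Matrix.IsHermitian

variable {n : Type*} [Fintype n] [DecidableEq n] {A : Matrix n n ℝ} (hA : A.IsHermitian)

theorem eigenvalues_eq_dotProduct (p : n) :
    hA.eigenvalues p = ⇑(hA.eigenvectorBasis p) ⬝ᵥ A *ᵥ ⇑(hA.eigenvectorBasis p) := by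
  simpa using hA.eigenvalues_eq p

theorem dotProduct_mulVec_eq_sum (x : EuclideanSpace ℝ n) :
    ⇑x ⬝ᵥ A *ᵥ ⇑x = ∑ p, hA.eigenvalues p * inner ℝ (hA.eigenvectorBasis p) x ^ 2 := by
  have hAx : A *ᵥ ⇑x =
      ∑ p, (hA.eigenvalues p * inner ℝ (hA.eigenvectorBasis p) x) • ⇑(hA.eigenvectorBasis p) := by
    conv_lhs => rw [← hA.eigenvectorBasis.sum_repr' x]
    simp [mulVec_sum, mulVec_smul, mulVec_eigenvectorBasis, smul_smul, mul_comm]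
  rw [hAx, dotProduct_sum]
  refine sum_congr rfl fun p _ => ?_
  simp [EuclideanSpace.inner_eq_star_dotProduct]
  ring

theorem inner_eigenvectorBasis_eq_zero {v : EuclideanSpace ℝ n} (hv : A *ᵥ ⇑v = 0) {p : n}
    (hp : hA.eigenvalues p ≠ 0) : inner ℝ v (hA.eigenvectorBasis p) = 0 := by
  have h : hA.eigenvalues p * inner ℝ v (hA.eigenvectorBasis p) = 0 :=
    calc hA.eigenvalues p * inner ℝ v (hA.eigenvectorBasis p)
        = (A *ᵥ ⇑(hA.eigenvectorBasis p)) ⬝ᵥ ⇑v := by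
          simp [mulVec_eigenvectorBasis, EuclideanSpace.inner_eq_star_dotProduct]
      _ = ⇑(hA.eigenvectorBasis p) ⬝ᵥ A *ᵥ ⇑v := by
          rw [dotProduct_comm, dotProduct_mulVec, ← mulVec_transpose,
            ← conjTranspose_eq_transpose_of_trivial, hA.eq, dotProduct_comm]
      _ = 0 := by rw [hv, dotProduct_zero]
  exact (mul_eq_zero.1 h).resolve_left hp

end Matrix.IsHermitian

namespace SimpleGraph

variable {V : Type*} [Fintype V] [DecidableEq V] (G : SimpleGraph V) [DecidableRel G.Adj]

theorem lapMatrix_add_lapMatrix_compl :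
    G.lapMatrix ℝ + Gᶜ.lapMatrix ℝ = (Fintype.card V : ℝ) • 1 - Matrix.of fun _ _ => 1 := by
  ext i j
  rcases eq_or_ne i j with rfl | hij
  · have := G.degree_lt_card_verts i
    simp [lapMatrix, degMatrix, G.degree_compl i, Nat.cast_sub (Nat.le_sub_one_of_lt this),
      Nat.cast_sub (Fintype.card_pos_iff.2 ⟨i⟩)]
  · by_cases hadj : G.Adj i j <;> simp [lapMatrix, degMatrix, hij, hadj]

theorem trace_lapMatrix : (G.lapMatrix ℝ).trace = 2 * #G.edgeFinset := by
  simp [lapMatrix, degMatrix, Matrix.trace_sub, ← Nat.cast_sum, sum_degrees_eq_twice_card_edges]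

end SimpleGraph

namespace Brouwer

variable {V : Type*}

section SumKLargest

variable [Fintype V] (f : V → ℝ)

theorem sum_le_sumKLargest (T : Finset V) : ∑ i ∈ T, f i ≤ sumKLargest f #T :=
  le_csSup ((Set.finite_range fun T : Finset V => ∑ i ∈ T, f i).subset
    (by rintro x ⟨T, -, rfl⟩; exact ⟨T, rfl⟩)).bddAbove ⟨T, rfl, rfl⟩

theorem sumKLargest_le {k : ℕ} (hk : k ≤ Fintype.card V) {b : ℝ}
    (hb : ∀ T : Finset V, #T = k → ∑ i ∈ T, f i ≤ b) : sumKLargest f k ≤ b := by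
  obtain ⟨T, -, hT⟩ := exists_subset_card_eq (s := (univ : Finset V)) (by simpa using hk)
  exact csSup_le ⟨_, T, hT, rfl⟩ (by rintro x ⟨T, hT, rfl⟩; exact hb T hT)

@[simp]
theorem sumKLargest_zero : sumKLargest f 0 = 0 := by
  simp [sumKLargest, card_eq_zero]

theorem exists_card_eq_forall_le {r : ℕ} (hr : r ≤ Fintype.card V) :
    ∃ T : Finset V, #T = r ∧ ∀ i ∈ T, ∀ j ∉ T, f j ≤ f i := by
  classical
  obtain ⟨T, hTr, hTmax⟩ := exists_max_image ((univ : Finset V).powersetCard r)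
    (fun T => ∑ i ∈ T, f i) (powersetCard_nonempty.2 (by simpa using hr))
  refine ⟨T, (mem_powersetCard.1 hTr).2, fun i hi j hj => ?_⟩
  by_contra! hlt
  have hj' : j ∉ T.erase i := fun h => hj (mem_of_mem_erase h)
  have hswap := hTmax (insert j (T.erase i)) (mem_powersetCard.2 ⟨subset_univ _, by
    rw [card_insert_of_notMem hj', card_erase_of_mem hi, (mem_powersetCard.1 hTr).2]
    have := (mem_powersetCard.1 hTr).2 ▸ card_pos.2 ⟨i, hi⟩
    omega⟩)
  rw [sum_insert hj', ← add_sum_erase T f hi] at hswap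
  linarith

theorem exists_card_eq_threshold {r : ℕ} (hr : r ≤ Fintype.card V) {B : ℝ} (hB : 0 ≤ B)
    (hf : ∀ j, f j ∈ Set.Icc 0 B) :
    ∃ T : Finset V, #T = r ∧ ∃ t ∈ Set.Icc 0 B, (∀ i ∈ T, t ≤ f i) ∧ ∀ j ∉ T, f j ≤ t := by
  obtain ⟨T, hT, hsep⟩ := exists_card_eq_forall_le f hr
  refine ⟨T, hT, ?_⟩
  rcases T.eq_empty_or_nonempty with rfl | hne
  · exact ⟨B, ⟨hB, le_rfl⟩, by simp, fun j _ => (hf j).2⟩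
  · obtain ⟨i, hi, hmin⟩ := T.exists_min_image f hne
    exact ⟨f i, hf i, hmin, hsep i hi⟩

theorem sum_mul_le_sumKLargest_add {r : ℕ} (hr : r ≤ Fintype.card V) {B e : ℝ} (hB : 0 ≤ B)
    (he : 0 ≤ e) (hf : ∀ j, f j ∈ Set.Icc 0 B) {c : V → ℝ} (hc : ∀ j, c j ∈ Set.Icc 0 1)
    (hsum : ∑ j, c j ≤ r + e) : ∑ j, c j * f j ≤ sumKLargest f r + e * B := by
  classical
  obtain ⟨T, hT, t, ⟨ht0, htB⟩, hin, hout⟩ := exists_card_eq_threshold f hr hB hf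
  -- `(1 - c j) (f j - t) ≥ 0` on `T` and `c j (t - f j) ≥ 0` off `T`
  have hpoint : ∀ j,
      c j * f j ≤ (if j ∈ T then f j else 0) + t * (c j - if j ∈ T then 1 else 0) := by
    intro j
    obtain ⟨hc0, hc1⟩ := hc j
    split_ifs with hj
    · nlinarith [hin j hj]
    · nlinarith [hout j hj]
  calc ∑ j, c j * f j ≤ ∑ i ∈ T, f i + t * (∑ j, c j - r) := by
        refine (sum_le_sum fun j _ => hpoint j).trans_eq ?_
        simp [sum_add_distrib, ← mul_sum, sum_sub_distrib, hT]
    _ ≤ sumKLargest f r + e * B := by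
        refine add_le_add (hT ▸ sum_le_sumKLargest f T) ?_
        calc t * (∑ j, c j - r) ≤ t * e := by gcongr; linarith
          _ ≤ e * B := by rw [mul_comm]; gcongr

end SumKLargest

section KyFan

variable {ι κ E : Type*} [NormedAddCommGroup E] [InnerProductSpace ℝ E]

theorem sum_inner_sq_le_add_sumKLargest [Fintype ι] {b : ι → E} (hb : Orthonormal ℝ b)
    {B : ℝ} (hB : 0 ≤ B) {μ : ι → ℝ} (hμ : ∀ p, μ p ∈ Set.Icc 0 B) {u : E} (hu : ‖u‖ = 1)
    (hub : ∀ p, μ p ≠ 0 → inner ℝ u (b p) = 0) {w : κ → E} (hw : Orthonormal ℝ w)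
    {S : Finset κ} {k : ℕ} (hS : #S = k + 1) (hk : k ≤ Fintype.card ι) :
    ∑ i ∈ S, (B * inner ℝ u (w i) ^ 2 + ∑ p, μ p * inner ℝ (b p) (w i) ^ 2)
      ≤ B + sumKLargest μ k := by
  classical
  set s := univ.filter (μ · ≠ 0)
  set a := ∑ i ∈ S, inner ℝ u (w i) ^ 2
  -- `c p` measures how much of the frame `w` lies along `b p`; Bessel's inequality for the
  -- orthonormal family `u, (b p)_{p ∈ s}` bounds their total by `k + 1 - a`
  set c : ι → ℝ := fun p => if p ∈ s then ∑ i ∈ S, inner ℝ (b p) (w i) ^ 2 else 0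
  have ha : a ≤ 1 := by simpa [a, real_inner_comm, hu] using hw.sum_inner_sq_le S u
  have hc : ∀ p, c p ∈ Set.Icc 0 1 := by
    intro p
    by_cases hp : p ∈ s
    · have := hw.sum_inner_sq_le S (b p)
      simp only [real_inner_comm (b p), hb.1 p] at this
      simp only [c, hp, if_true]
      exact ⟨sum_nonneg fun _ _ => sq_nonneg _, by simpa using this⟩
    · simp [c, hp]
  have hcsum : ∑ p, c p ≤ k + (1 - a) := by
    have hbessel : ∀ i ∈ S, inner ℝ u (w i) ^ 2 + ∑ p ∈ s, inner ℝ (b p) (w i) ^ 2 ≤ 1 :=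
      fun i _ => by
        simpa [hw.1 i] using hb.inner_sq_add_sum_inner_sq_le hu (by simpa [s] using hub) (w i)
    have := sum_le_sum hbessel
    rw [sum_add_distrib, sum_comm] at this
    simp only [c, sum_ite_mem, univ_inter, sum_const, hS, nsmul_eq_mul, mul_one] at this ⊢
    push_cast at this
    linarith
  have hμc : ∑ i ∈ S, ∑ p, μ p * inner ℝ (b p) (w i) ^ 2 = ∑ p, c p * μ p := by
    rw [sum_comm]
    refine sum_congr rfl fun p _ => ?_
    by_cases hp : μ p = 0 <;> simp [c, s, hp, mul_sum, mul_comm]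
  have := sum_mul_le_sumKLargest_add μ hk hB (by linarith) hμ hc hcsum
  rw [sum_add_distrib, ← mul_sum, hμc]
  linear_combination this

end KyFan

section Laplacian

open Matrix

variable [Fintype V] (G : SimpleGraph V)

variable (V) in
noncomputable def normalizedOnes : EuclideanSpace ℝ V :=
  WithLp.toLp 2 fun _ => (√(Fintype.card V))⁻¹

theorem norm_normalizedOnes [Nonempty V] : ‖normalizedOnes V‖ = 1 := by
  have hn : (0 : ℝ) < Fintype.card V := by exact_mod_cast Fintype.card_pos
  rw [EuclideanSpace.norm_eq]
  simp [normalizedOnes, inv_pow, Real.sq_sqrt hn.le, hn.ne']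

theorem card_mul_inner_normalizedOnes_sq (x : EuclideanSpace ℝ V) :
    Fintype.card V * inner ℝ (normalizedOnes V) x ^ 2 = (∑ i, x i) ^ 2 := by
  rcases isEmpty_or_nonempty V with hV | hV
  · simp
  have hn : (0 : ℝ) < Fintype.card V := by exact_mod_cast Fintype.card_pos
  simp only [normalizedOnes, EuclideanSpace.inner_eq_star_dotProduct, dotProduct, Pi.star_apply,
    star_trivial, ← sum_mul, mul_pow, inv_pow, Real.sq_sqrt hn.le]
  field_simp

theorem lapMatrix_mulVec_normalizedOnes [DecidableEq V] [DecidableRel G.Adj] :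
    G.lapMatrix ℝ *ᵥ ⇑(normalizedOnes V) = 0 := by
  have : ⇑(normalizedOnes V) = (√(Fintype.card V))⁻¹ • fun _ => (1 : ℝ) := by
    ext; simp [normalizedOnes]
  rw [this, mulVec_smul, G.lapMatrix_mulVec_const_eq_zero, smul_zero]

theorem quadForm_lapMatrix_add_compl [DecidableEq V] [DecidableRel G.Adj]
    (x : EuclideanSpace ℝ V) :
    ⇑x ⬝ᵥ G.lapMatrix ℝ *ᵥ ⇑x + ⇑x ⬝ᵥ Gᶜ.lapMatrix ℝ *ᵥ ⇑x
      + Fintype.card V * inner ℝ (normalizedOnes V) x ^ 2 = Fintype.card V * ‖x‖ ^ 2 := by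
  have hJ : ⇑x ⬝ᵥ (of fun _ _ => (1 : ℝ)) *ᵥ ⇑x = (∑ i, x i) ^ 2 := by
    simp [mulVec, dotProduct, sq, sum_mul, mul_comm]
  have hnorm : ‖x‖ ^ 2 = ⇑x ⬝ᵥ ⇑x := by
    rw [EuclideanSpace.real_norm_sq_eq]
    simp only [dotProduct, sq]
  rw [← dotProduct_add, ← add_mulVec, G.lapMatrix_add_lapMatrix_compl, sub_mulVec,
    dotProduct_sub, smul_mulVec, one_mulVec, dotProduct_smul, hJ, card_mul_inner_normalizedOnes_sq,
    hnorm, smul_eq_mul]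
  ring

theorem lapEig_eq [DecidableEq V] [DecidableRel G.Adj] :
    lapEig G = (lapMatrix_isHermitian G).eigenvalues := by
  unfold lapEig; congr!

theorem numEdges_eq [DecidableRel G.Adj] : numEdges G = #G.edgeFinset := by
  unfold numEdges; congr!

theorem sum_lapEig [DecidableEq V] : ∑ i, lapEig G i = 2 * numEdges G := by
  classical
  rw [lapEig_eq, numEdges_eq, ← G.trace_lapMatrix,
    (lapMatrix_isHermitian G).trace_eq_sum_eigenvalues]
  simp

theorem numEdges_add_numEdges_compl : numEdges G + numEdges Gᶜ = (Fintype.card V).choose 2 := by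
  classical
  have h := congrArg Matrix.trace G.lapMatrix_add_lapMatrix_compl
  rw [Matrix.trace_add, G.trace_lapMatrix, Gᶜ.trace_lapMatrix, ← numEdges_eq, ← numEdges_eq] at h
  simp only [Matrix.trace, diag_apply, Matrix.sub_apply, Matrix.smul_apply, one_apply_eq,
    smul_eq_mul, mul_one, of_apply, sum_sub_distrib, sum_const, card_univ, nsmul_eq_mul] at h
  have : (numEdges G + numEdges Gᶜ : ℝ) = ((Fintype.card V).choose 2 : ℕ) := by
    rw [Nat.cast_choose_two]; linarith
  exact_mod_cast this

theorem lapEig_nonneg [DecidableEq V] (p : V) : 0 ≤ lapEig G p := by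
  classical
  rw [lapEig_eq]
  exact (G.posSemidef_lapMatrix ℝ).eigenvalues_nonneg p

theorem lapEig_le_card [DecidableEq V] (p : V) : lapEig G p ≤ Fintype.card V := by
  classical
  set hL := lapMatrix_isHermitian G
  set b := hL.eigenvectorBasis p
  have hq := quadForm_lapMatrix_add_compl G b
  rw [hL.eigenvectorBasis.orthonormal.1 p, one_pow, mul_one] at hq
  have hc : 0 ≤ ⇑b ⬝ᵥ Gᶜ.lapMatrix ℝ *ᵥ ⇑b := by
    simpa using (Gᶜ.posSemidef_lapMatrix ℝ).dotProduct_mulVec_nonneg b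
  have hu :=
    mul_nonneg (Nat.cast_nonneg (Fintype.card V)) (sq_nonneg (inner ℝ (normalizedOnes V) b))
  rw [lapEig_eq, hL.eigenvalues_eq_dotProduct]
  linarith

theorem sub_sLap_le_sum_lapEig_compl [DecidableEq V] {k : ℕ} (hk : k < Fintype.card V)
    {S : Finset V} (hS : #S = k + 1) :
    k * Fintype.card V - sLap G k ≤ ∑ i ∈ S, lapEig Gᶜ i := by
  classical
  have : Nonempty V := Fintype.card_pos_iff.1 (by omega)
  set n : ℝ := (Fintype.card V : ℝ)
  set hL := lapMatrix_isHermitian G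
  set w := (lapMatrix_isHermitian Gᶜ).eigenvectorBasis
  have heig : ∀ i, lapEig Gᶜ i = n - (n * inner ℝ (normalizedOnes V) (w i) ^ 2
      + ∑ p, lapEig G p * inner ℝ (hL.eigenvectorBasis p) (w i) ^ 2) := by
    intro i
    have hq := quadForm_lapMatrix_add_compl G (w i)
    rw [hL.dotProduct_mulVec_eq_sum, w.orthonormal.1 i, one_pow, mul_one] at hq
    rw [lapEig_eq, lapEig_eq, (lapMatrix_isHermitian Gᶜ).eigenvalues_eq_dotProduct]
    linarith
  have hKF := sum_inner_sq_le_add_sumKLargest hL.eigenvectorBasis.orthonormal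
    (Nat.cast_nonneg _) (fun p => ⟨lapEig_nonneg G p, lapEig_le_card G p⟩) norm_normalizedOnes
    (fun p hp => hL.inner_eigenvectorBasis_eq_zero (lapMatrix_mulVec_normalizedOnes G)
      (by rwa [lapEig_eq] at hp)) w.orthonormal hS hk.le
  rw [sum_congr rfl fun i _ => heig i, sum_sub_distrib, sum_const, hS, sLap]
  simp only [nsmul_eq_mul] at hKF ⊢
  push_cast
  linarith

end Laplacian

theorem bc_zero [Fintype V] [DecidableEq V] (G : SimpleGraph V) : BC G 0 := by
  simp [BC, sLap]

theorem bc_compl_general {V : Type*} [Fintype V] [DecidableEq V] (G : SimpleGraph V)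
    (k : ℕ) (h : BC G k) :
    BC Gᶜ (Fintype.card V - k - 1) := by
  obtain hk | hk := le_or_gt (Fintype.card V) k
  · rw [Nat.sub_sub, Nat.sub_eq_zero_of_le (by omega)]
    exact bc_zero Gᶜ
  obtain ⟨j, hj⟩ : ∃ j, Fintype.card V = k + 1 + j := ⟨Fintype.card V - k - 1, by omega⟩
  rw [show Fintype.card V - k - 1 = j by omega]
  refine sumKLargest_le _ (by omega) fun T hT => ?_
  have hS : #Tᶜ = k + 1 := by rw [card_compl, hT]; omega
  have hsplit := sum_add_sum_compl T (lapEig Gᶜ)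
  have hlow := sub_sLap_le_sum_lapEig_compl G hk hS
  have htrace := sum_lapEig Gᶜ
  have hedges : (numEdges G + numEdges Gᶜ : ℝ) = ((Fintype.card V).choose 2 : ℕ) := by
    exact_mod_cast numEdges_add_numEdges_compl G
  have hchoose : ((k + 1 + j).choose 2 : ℝ) + ((k + 1).choose 2 : ℕ)
      = k * (k + 1 + j) + ((j + 1).choose 2 : ℕ) := by
    simp only [Nat.cast_choose_two]
    push_cast
    ring
  unfold BC at h
  rw [hj] at hedges hlow
  push_cast at hchoose hedges hlow
  linarith

/-- if `BC_k(G)` holds, then `BC_{n-k-1}(Gᶜ)` holds, for `1 ≤ k ≤ n-2`. -/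
theorem bc_compl {V : Type*} [Fintype V] [DecidableEq V] (G : SimpleGraph V)
    (k : ℕ) (hk1 : 1 ≤ k) (hk2 : k ≤ Fintype.card V - 2) (h : BC G k) :
    BC Gᶜ (Fintype.card V - k - 1) :=
  bc_compl_general G k h

end Brouwer
end

section
/- Let G be a simple graph on n vertices with splittance σ(G). If 1 ≤ k ≤ σ(G)/√(8n), then BC_k(G) holds. In particular, if σ(G) ≥ √2 · n^{3/2}, then BC_k(G) holds for every k with 1 ≤ k ≤ n. -/
open Finset

/-!
Choose an orthonormal eigenbasis `b` of the Laplacian `L = D - A`. For a set `T` of `k` indices,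
`∑_{i ∈ T} λ_i = ∑_u d_u x_u - ∑_{u ∼ v} c_{uv}`, where `c = ∑_{i ∈ T} b_i b_iᵀ` is an orthogonal
projection of rank `k` and `x_u = c_{uu} ∈ [0, 1]` sums to `k`. Cauchy–Schwarz bounds the
adjacency term by `‖A‖_F ‖c‖_F = √(2mk)`, and the degree term is at most the degree sum `∑_S d`
over some `k`-set `S`. Making `S` a clique and deleting the edges outside `S` gives a split graph at
edit distance `m + C(k,2) - ∑_S d`, so `∑_S d ≤ m + C(k,2) - σ`; hence `BC_k` holds once
`√(2mk) ≤ σ`. If instead `m ≥ 2nk`, the bound `∑_S d ≤ kn` suffices.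
-/

open Finset Matrix

theorem Nat.two_mul_choose_two (n : ℕ) : 2 * n.choose 2 = n * (n - 1) := by
  rw [Nat.choose_two_right, Nat.mul_div_cancel' (Nat.even_mul_pred_self n).two_dvd]

section Knapsack

variable {ι : Type*} [DecidableEq ι] {d x : ι → ℝ}

theorem le_of_forall_card_eq_sum_le {S : Finset ι}
    (hS : ∀ S' : Finset ι, #S' = #S → ∑ i ∈ S', d i ≤ ∑ i ∈ S, d i) {u v : ι} (hu : u ∈ S)
    (hv : v ∉ S) : d v ≤ d u := by
  have hv' : v ∉ S.erase u := fun h => hv (mem_of_mem_erase h)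
  have h := hS (insert v (S.erase u)) (by rw [card_insert_of_notMem hv', card_erase_add_one hu])
  rw [sum_insert hv', ← add_le_add_iff_right (d u), add_assoc, sum_erase_add _ _ hu] at h
  linarith

variable [Fintype ι]

theorem sum_mul_le_sum_of_forall_le {S : Finset ι} {t : ℝ} (hx0 : ∀ u, 0 ≤ x u)
    (hx1 : ∀ u, x u ≤ 1) (hsum : ∑ u, x u = #S) (hS : ∀ u ∈ S, t ≤ d u)
    (hSc : ∀ u ∉ S, d u ≤ t) : ∑ u, d u * x u ≤ ∑ u ∈ S, d u := by
  have key : ∑ u, (d u - t) * x u ≤ ∑ u ∈ S, (d u - t) := by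
    rw [← univ_inter S, ← sum_ite_mem]
    refine sum_le_sum fun u _ => ?_
    split_ifs with hu
    · exact mul_le_of_le_one_right (sub_nonneg.2 (hS u hu)) (hx1 u)
    · exact mul_nonpos_of_nonpos_of_nonneg (sub_nonpos.2 (hSc u hu)) (hx0 u)
  simp only [sub_mul, sum_sub_distrib, ← mul_sum, hsum, sum_const, nsmul_eq_mul] at key
  linarith

theorem exists_card_eq_sum_mul_le {k : ℕ} (hx0 : ∀ u, 0 ≤ x u) (hx1 : ∀ u, x u ≤ 1)
    (hsum : ∑ u, x u = k) : ∃ S : Finset ι, #S = k ∧ ∑ u, d u * x u ≤ ∑ u ∈ S, d u := by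
  rcases k.eq_zero_or_pos with rfl | hk
  · have hx (u : ι) : x u = 0 :=
      (sum_eq_zero_iff_of_nonneg fun u _ => hx0 u).1 (by exact_mod_cast hsum) u (mem_univ u)
    exact ⟨∅, rfl, by simp [hx]⟩
  have hkcard : k ≤ Fintype.card ι := by
    have : ∑ u, x u ≤ ∑ _u : ι, (1 : ℝ) := sum_le_sum fun u _ => hx1 u
    rw [hsum, sum_const, card_univ, nsmul_one] at this
    exact_mod_cast this
  obtain ⟨S, hSmem, hSmax⟩ := exists_max_image (univ.powersetCard k) (fun S => ∑ i ∈ S, d i)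
    (powersetCard_nonempty.2 (by simpa using hkcard))
  have hScard : #S = k := (mem_powersetCard.1 hSmem).2
  have hSne : S.Nonempty := card_pos.1 (hScard ▸ hk)
  refine ⟨S, hScard, sum_mul_le_sum_of_forall_le hx0 hx1 (by rw [hsum, hScard])
    (fun u hu => inf'_le d hu) (fun v hv => le_inf' hSne d fun u hu => ?_)⟩
  exact le_of_forall_card_eq_sum_le
    (fun S' hS' => hSmax S' (mem_powersetCard.2 ⟨subset_univ _, hS'.trans hScard⟩)) hu hv

end Knapsack

namespace OrthonormalBasis

variable {ι n : Type*} [Fintype ι] [Fintype n] (b : OrthonormalBasis ι ℝ (EuclideanSpace ℝ n))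

theorem sum_apply_mul_apply [DecidableEq ι] (i j : ι) :
    ∑ u, b i u * b j u = if i = j then 1 else 0 := by
  rw [← orthonormal_iff_ite.1 b.orthonormal i j, PiLp.inner_apply]
  simp [mul_comm]

theorem sum_sq_apply_le_one [DecidableEq n] (T : Finset ι) (u : n) :
    ∑ i ∈ T, b i u ^ 2 ≤ 1 := by
  have h : ∑ i, b i u ^ 2 = 1 := by
    simpa [EuclideanSpace.inner_single_right] using
      b.sum_sq_norm_inner_right (EuclideanSpace.single u 1)
  exact (sum_le_univ_sum_of_nonneg fun _ => sq_nonneg _).trans h.le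

theorem sum_sum_sq_apply (T : Finset ι) : ∑ u, ∑ i ∈ T, b i u ^ 2 = #T := by
  classical
  rw [sum_comm]
  simp [sq, b.sum_apply_mul_apply]

theorem sum_sum_sq_sum_apply_mul_apply (T : Finset ι) :
    ∑ u, ∑ v, (∑ i ∈ T, b i u * b i v) ^ 2 = #T := by
  classical
  calc ∑ u, ∑ v, (∑ i ∈ T, b i u * b i v) ^ 2
      = ∑ i ∈ T, ∑ j ∈ T, (∑ u, b i u * b j u) * ∑ v, b i v * b j v := by
        simp only [sq, sum_mul_sum]
        rw [sum_comm]
        refine (sum_congr rfl fun v _ => sum_comm).trans ?_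
        rw [sum_comm]
        refine sum_congr rfl fun i _ => ?_
        rw [sum_comm]
        refine (sum_congr rfl fun v _ => sum_comm).trans ?_
        rw [sum_comm]
        exact sum_congr rfl fun _ _ => sum_congr rfl fun _ _ => sum_congr rfl fun _ _ => by ring
    _ = #T := by simp [b.sum_apply_mul_apply]

end OrthonormalBasis

namespace Brouwer

variable {V : Type*}

/-- `S` made a clique, the edges of `G` outside `S` deleted, those meeting `S` kept. -/
def splitCompletion (G : SimpleGraph V) (S : Finset V) : SimpleGraph V :=
  SimpleGraph.fromRel fun u v => u ∈ S ∧ (v ∈ S ∨ G.Adj u v)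

theorem isSplit_splitCompletion (G : SimpleGraph V) (S : Finset V) :
    IsSplit (splitCompletion G S) := by
  refine ⟨S, fun u hu v hv huv => ⟨huv, .inl ⟨hu, .inl hv⟩⟩, fun u hu v hv huv => ?_⟩
  simp_all [splitCompletion]

variable [Fintype V]

section Counting

theorem numEdges_eq_s15 (G : SimpleGraph V) [Fintype G.edgeSet] : numEdges G = #G.edgeFinset := by
  unfold numEdges; congr!

theorem two_mul_numEdges_le (G : SimpleGraph V) : 2 * numEdges G ≤ Fintype.card V ^ 2 := by
  classical
  calc 2 * numEdges G ≤ 2 * (Fintype.card V).choose 2 := by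
        rw [numEdges_eq_s15]; exact Nat.mul_le_mul_left 2 G.card_edgeFinset_le_card_choose_two
    _ = Fintype.card V * (Fintype.card V - 1) := Nat.two_mul_choose_two _
    _ ≤ Fintype.card V ^ 2 := by rw [sq]; exact Nat.mul_le_mul_left _ (Nat.sub_le _ 1)

theorem two_mul_card_edgeFinset (G : SimpleGraph V) [DecidableRel G.Adj] [Fintype G.edgeSet] :
    2 * #G.edgeFinset = ∑ u, ∑ v, if G.Adj u v then 1 else 0 := by
  convert G.sum_degrees_eq_twice_card_edges.symm using 3
  · convert rfl
  · exact (G.degree_eq_sum_if_adj _).symm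

variable [DecidableEq V]

theorem sum_sum_ite_mem_and_adj (G : SimpleGraph V) [DecidableRel G.Adj] (S : Finset V) :
    ∑ u, ∑ v, (if u ∈ S ∧ G.Adj u v then 1 else 0) = ∑ u ∈ S, G.degree u := by
  have hdeg (u : V) : G.degree u = ∑ v, if G.Adj u v then 1 else 0 := by
    simpa using G.degree_eq_sum_if_adj (R := ℕ) u
  simp_rw [hdeg, ite_and, sum_ite_irrel, sum_const_zero, sum_ite_mem, univ_inter]

theorem sum_sum_ite_mem_and_mem_and_ne (S : Finset V) :
    ∑ u, ∑ v, (if u ∈ S ∧ v ∈ S ∧ u ≠ v then 1 else 0) = 2 * (#S).choose 2 := by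
  simp_rw [ite_and, sum_ite_irrel, sum_const_zero, sum_ite_mem, univ_inter]
  rw [sum_congr rfl fun u hu => by rw [sum_boole, Nat.cast_id, filter_ne, card_erase_of_mem hu],
    sum_const, smul_eq_mul, Nat.two_mul_choose_two]

theorem editDistance_eq (G H : SimpleGraph V) [Fintype G.edgeSet] [Fintype H.edgeSet] :
    editDistance G H = #(symmDiff G.edgeFinset H.edgeFinset) := by
  unfold editDistance; congr!

theorem two_mul_editDistance (G H : SimpleGraph V) [DecidableRel G.Adj] [DecidableRel H.Adj] :
    2 * editDistance G H = (∑ u, ∑ v, if G.Adj u v ∧ ¬H.Adj u v then 1 else 0) +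
      ∑ u, ∑ v, if H.Adj u v ∧ ¬G.Adj u v then 1 else 0 := by
  rw [editDistance_eq, symmDiff_def, sup_eq_union, card_union_of_disjoint disjoint_sdiff_sdiff,
    ← SimpleGraph.edgeFinset_sdiff, ← SimpleGraph.edgeFinset_sdiff, mul_add,
    two_mul_card_edgeFinset, two_mul_card_edgeFinset]
  simp only [SimpleGraph.sdiff_adj]

end Counting

section Splittance

variable [DecidableEq V]

theorem editDistance_splitCompletion_add_sum_degree (G : SimpleGraph V) [DecidableRel G.Adj]
    (S : Finset V) :
    editDistance G (splitCompletion G S) + ∑ u ∈ S, G.degree u = numEdges G + (#S).choose 2 := by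
  classical
  set H := splitCompletion G S
  -- Count ordered pairs: `2 · editDistance + 2 ∑_S d = 2m + |S| (|S| - 1)`, pair by pair.
  have hpt (u v : V) :
      (if G.Adj u v ∧ ¬H.Adj u v then 1 else 0) + (if H.Adj u v ∧ ¬G.Adj u v then 1 else 0) +
        (if u ∈ S ∧ G.Adj u v then 1 else 0) + (if v ∈ S ∧ G.Adj v u then 1 else 0) =
      (if G.Adj u v then 1 else 0) + (if u ∈ S ∧ v ∈ S ∧ u ≠ v then 1 else 0) := by
    by_cases huv : u = v
    · simp [huv]
    by_cases hadj : G.Adj u v <;> by_cases hu : u ∈ S <;> by_cases hv : v ∈ S <;>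
      simp [H, splitCompletion, huv, hadj, hu, hv, G.adj_comm v u]
  have h := sum_congr rfl fun u (_ : u ∈ univ) => sum_congr rfl fun v (_ : v ∈ univ) => hpt u v
  have hswap : ∑ u, ∑ v, (if v ∈ S ∧ G.Adj v u then 1 else 0) = ∑ u ∈ S, G.degree u := by
    rw [sum_comm]; exact sum_sum_ite_mem_and_adj G S
  simp only [sum_add_distrib] at h
  rw [← two_mul_editDistance, sum_sum_ite_mem_and_adj, hswap, ← two_mul_card_edgeFinset,
    sum_sum_ite_mem_and_mem_and_ne, ← numEdges_eq_s15] at h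
  omega

theorem splittance_add_sum_degree_le (G : SimpleGraph V) [DecidableRel G.Adj] (S : Finset V) :
    splittance G + ∑ u ∈ S, G.degree u ≤ numEdges G + (#S).choose 2 := by
  rw [← editDistance_splitCompletion_add_sum_degree]
  exact Nat.add_le_add_right (Nat.sInf_le ⟨_, isSplit_splitCompletion G S, rfl⟩ :
    splittance G ≤ editDistance G (splitCompletion G S)) _

end Splittance

section Spectral

theorem sum_sum_sq_adj (G : SimpleGraph V) [DecidableRel G.Adj] :
    ∑ u, ∑ v, (if G.Adj u v then (1 : ℝ) else 0) ^ 2 = 2 * numEdges G := by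
  simp_rw [ite_pow, one_pow, zero_pow two_ne_zero, ← G.degree_eq_sum_if_adj]
  exact_mod_cast numEdges_eq_s15 G ▸ G.sum_degrees_eq_twice_card_edges

theorem neg_sqrt_le_sum_sum_adj (G : SimpleGraph V) [DecidableRel G.Adj] (c : V → V → ℝ) :
    -√(2 * numEdges G * ∑ u, ∑ v, c u v ^ 2) ≤ ∑ u, ∑ v, if G.Adj u v then c u v else 0 := by
  have h := Real.sum_mul_le_sqrt_mul_sqrt univ
    (fun p : V × V => if G.Adj p.1 p.2 then (1 : ℝ) else 0) (fun p => -c p.1 p.2)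
  simp only [univ_product_univ.symm, sum_product, neg_sq, sum_sum_sq_adj] at h
  have hsum : ∑ u, ∑ v, (if G.Adj u v then (1 : ℝ) else 0) * -c u v
      = -∑ u, ∑ v, if G.Adj u v then c u v else 0 := by
    simp only [← sum_neg_distrib, neg_ite, ite_mul, one_mul, zero_mul, neg_zero]
  rw [Real.sqrt_mul (by positivity)]
  linarith

variable [DecidableEq V]

theorem lapEig_eq_eigenvalues (G : SimpleGraph V) [DecidableRel G.Adj] :
    lapEig G = (lapMatrix_isHermitian G).eigenvalues := by
  unfold lapEig; congr!

theorem dotProduct_lapMatrix_mulVec (G : SimpleGraph V) [DecidableRel G.Adj] (x : V → ℝ) :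
    x ⬝ᵥ (G.lapMatrix ℝ *ᵥ x) =
      ∑ u, G.degree u * x u ^ 2 - ∑ u, ∑ v, if G.Adj u v then x u * x v else 0 := by
  unfold SimpleGraph.lapMatrix
  rw [sub_mulVec, dotProduct_sub, SimpleGraph.dotProduct_mulVec_degMatrix,
    SimpleGraph.dotProduct_mulVec_adjMatrix]
  simp [sq, mul_assoc]

theorem sum_lapEig_eq (G : SimpleGraph V) [DecidableRel G.Adj] (T : Finset V) :
    let b := (lapMatrix_isHermitian G).eigenvectorBasis
    ∑ i ∈ T, lapEig G i = ∑ u, G.degree u * ∑ i ∈ T, b i u ^ 2 -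
      ∑ u, ∑ v, if G.Adj u v then ∑ i ∈ T, b i u * b i v else 0 := by
  intro b
  have heig (i : V) : lapEig G i = b i ⬝ᵥ (G.lapMatrix ℝ *ᵥ b i) := by
    rw [lapEig_eq_eigenvalues, IsHermitian.eigenvalues_eq]
    simp [b]
  simp only [heig, dotProduct_lapMatrix_mulVec, sum_sub_distrib, mul_sum]
  rw [sum_comm (s := T)]
  congr 1
  rw [sum_comm]
  refine sum_congr rfl fun u _ => ?_
  rw [sum_comm]
  simp only [sum_ite_irrel, sum_const_zero]

theorem exists_sum_lapEig_le (G : SimpleGraph V) [DecidableRel G.Adj] (T : Finset V) :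
    ∃ S : Finset V, #S = #T ∧
      ∑ i ∈ T, lapEig G i ≤ ∑ u ∈ S, (G.degree u : ℝ) + √(2 * numEdges G * #T) := by
  set b := (lapMatrix_isHermitian G).eigenvectorBasis
  obtain ⟨S, hS, hdeg⟩ := exists_card_eq_sum_mul_le (d := fun u => (G.degree u : ℝ))
    (x := fun u => ∑ i ∈ T, b i u ^ 2) (fun u => sum_nonneg fun i _ => sq_nonneg _)
    (b.sum_sq_apply_le_one T) (b.sum_sum_sq_apply T)
  refine ⟨S, hS, ?_⟩
  have hadj := neg_sqrt_le_sum_sum_adj G fun u v => ∑ i ∈ T, b i u * b i v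
  rw [b.sum_sum_sq_sum_apply_mul_apply T] at hadj
  rw [sum_lapEig_eq]
  linarith

end Spectral

theorem sqrt_two_mul_numEdges_mul_le (G : SimpleGraph V) {k : ℕ} (hk : k ≤ Fintype.card V) :
    √(2 * numEdges G * k) ≤ (Fintype.card V : ℝ) ^ ((3 : ℝ) / 2) := by
  set n := Fintype.card V
  have hm : (2 * numEdges G : ℝ) ≤ n ^ 2 := by exact_mod_cast two_mul_numEdges_le G
  have hk' : (k : ℝ) ≤ n := by exact_mod_cast hk
  calc √(2 * numEdges G * k) ≤ √(n ^ 3) := Real.sqrt_le_sqrt (by nlinarith)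
    _ = (n : ℝ) ^ ((3 : ℝ) / 2) := by
        rw [Real.sqrt_eq_rpow, ← Real.rpow_natCast, ← Real.rpow_mul n.cast_nonneg]
        norm_num

variable [DecidableEq V]

theorem bc_of_forall_card_eq (G : SimpleGraph V) [DecidableRel G.Adj] {k : ℕ}
    (h : ∀ S : Finset V, #S = k →
      ∑ u ∈ S, (G.degree u : ℝ) + √(2 * numEdges G * k) ≤ numEdges G + (k + 1).choose 2) :
    BC G k := by
  refine Real.sSup_le ?_ (by positivity)
  rintro _ ⟨T, rfl, rfl⟩
  obtain ⟨S, hS, hT⟩ := exists_sum_lapEig_le G T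
  linarith [h S hS]

theorem bc_of_sqrt_le_splittance (G : SimpleGraph V) {k : ℕ}
    (h : √(2 * numEdges G * k) ≤ splittance G) : BC G k := by
  classical
  refine bc_of_forall_card_eq G fun S hS => ?_
  have hsplit : ((splittance G + ∑ u ∈ S, G.degree u : ℕ) : ℝ) ≤ numEdges G + (#S).choose 2 := by
    exact_mod_cast splittance_add_sum_degree_le G S
  have hchoose : ((#S).choose 2 : ℝ) ≤ (k + 1).choose 2 := by
    exact_mod_cast Nat.choose_le_choose 2 (hS.le.trans k.le_succ)
  push_cast at hsplit
  linarith

theorem bc_of_two_mul_card_mul_le_numEdges (G : SimpleGraph V) {k : ℕ}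
    (h : 2 * Fintype.card V * k ≤ numEdges G) : BC G k := by
  classical
  refine bc_of_forall_card_eq G fun S hS => ?_
  set n := Fintype.card V
  set m := numEdges G
  have hdeg : ∑ u ∈ S, (G.degree u : ℝ) ≤ k * n := by
    have := sum_le_card_nsmul S (fun u => (G.degree u : ℝ)) n
      fun u _ => by exact_mod_cast (G.degree_lt_card_verts u).le
    rwa [nsmul_eq_mul, hS] at this
  have hsqrt : √(2 * m * k) ≤ m / 2 := by
    rcases k.eq_zero_or_pos with rfl | hk
    · rw [Nat.cast_zero, mul_zero, Real.sqrt_zero]; positivity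
    have hkn : k ≤ n := hS ▸ card_le_univ S
    have hm : 2 * m ≤ n ^ 2 := two_mul_numEdges_le G
    have h8 : 8 * k ≤ m := by nlinarith
    rw [Real.sqrt_le_iff]
    constructor
    · positivity
    · have : (8 * k : ℝ) ≤ m := by exact_mod_cast h8
      nlinarith
  have hmR : (2 * n * k : ℝ) ≤ m := by exact_mod_cast h
  have hchoose : (0 : ℝ) ≤ (k + 1).choose 2 := by positivity
  linarith

/-- `BC_k(G)` holds for `1 ≤ k ≤ σ(G)/√(8n)`; in particular, if
`σ(G) ≥ √2 · n^{3/2}` then `BC_k(G)` holds for every `1 ≤ k ≤ n`. -/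
theorem bc_of_splittance {V : Type*} [Fintype V] [DecidableEq V] (G : SimpleGraph V) :
    (∀ k : ℕ, 1 ≤ k →
      (k : ℝ) ≤ (splittance G : ℝ) / Real.sqrt (8 * Fintype.card V) → BC G k) ∧
    (Real.sqrt 2 * (Fintype.card V : ℝ) ^ ((3 : ℝ) / 2) ≤ (splittance G : ℝ) →
      ∀ k : ℕ, 1 ≤ k → k ≤ Fintype.card V → BC G k) := by
  set n := Fintype.card V
  constructor
  · intro k hk hkσ
    have hn : (0 : ℝ) < n := by
      by_contra! hn
      simp [le_antisymm hn n.cast_nonneg] at hkσ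
      omega
    rcases le_or_gt (numEdges G) (2 * n * k) with hmk | hmk
    · refine bc_of_sqrt_le_splittance G ?_
      have hmk' : (numEdges G : ℝ) ≤ 2 * n * k := by exact_mod_cast hmk
      calc √(2 * numEdges G * k) ≤ √(k ^ 2 * (8 * n)) := Real.sqrt_le_sqrt (by nlinarith)
        _ = k * √(8 * n) := by rw [Real.sqrt_mul (by positivity), Real.sqrt_sq k.cast_nonneg]
        _ ≤ splittance G := (le_div_iff₀ (by positivity)).1 hkσ
    · exact bc_of_two_mul_card_mul_le_numEdges G hmk.le
  · intro hσ k _ hkn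
    refine bc_of_sqrt_le_splittance G ?_
    calc √(2 * numEdges G * k) ≤ (n : ℝ) ^ ((3 : ℝ) / 2) := sqrt_two_mul_numEdges_mul_le G hkn
      _ ≤ √2 * (n : ℝ) ^ ((3 : ℝ) / 2) :=
          le_mul_of_one_le_left (by positivity) (by simp [Real.one_le_sqrt])
      _ ≤ splittance G := hσ

end Brouwer
end
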